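/- Let d ≥ 1 and let f : ℝ^d → ℝ be differentiable with L-Lipschitz gradient satisfying ‖∇f(x)‖ ≤ B for all x. For δ > 0 define the δ-difference smoothed function f_δ(x) = E_u[f(x + δu) − f(x)], where u is distributed with the unit-scale truncated Cauchy density h. Then for every x ∈ ℝ^d, |f_δ(x)| ≤ (c₁₁/(d+1))·(Lδ²/2 + 2δB), where c₁₁ = 2Γ((d+1)/2)/(√π·Γ(d/2)·c₁). -/

import Mathlib

/-!
The bound is crude. By the mean value inequality, `|f (x + δu) - f x| ≤ B δ` on the unit ball,
which carries the density, so `|f_δ x| ≤ B δ`. Bounding the density by its peak `h(0)` on the unit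
ball, `1 = ∫ h ≤ h(0) vol(B(0, 1)) = Γ((d+1)/2) / (√π c₁ Γ(d/2 + 1))`, which says `d ≤ c₁₁`.
Hence `c₁₁ / (d + 1) · 2δB ≥ 2d/(d + 1) · δB ≥ δB`, and the `L`-term is nonnegative because a
Lipschitz constant is.
-/

open MeasureTheory Real Filter Topology ProbabilityTheory

/-- The truncated (to the `δ`-sphere) Cauchy density on `ℝ^d`, with normalizing
constant `c₁`: `h_δ(u) = Γ((d+1)/2)/(π^((d+1)/2) c₁ δ^d) · (1+‖u‖²/δ²)^(-(d+1)/2)`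
for `‖u‖ ≤ δ` and `0` otherwise. -/
noncomputable def truncCauchy (d : ℕ) (c₁ δ : ℝ) (u : EuclideanSpace ℝ (Fin d)) : ℝ :=
  if ‖u‖ ≤ δ then
    Real.Gamma (((d : ℝ) + 1) / 2) / (Real.pi ^ (((d : ℝ) + 1) / 2) * c₁ * δ ^ d) *
      (1 + ‖u‖ ^ 2 / δ ^ 2) ^ (-(((d : ℝ) + 1) / 2))
  else 0

/-- The unit-scale truncated Cauchy probability measure on `ℝ^d`. -/
noncomputable def truncCauchyMeasure (d : ℕ) (c₁ : ℝ) : Measure (EuclideanSpace ℝ (Fin d)) :=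
  volume.withDensity fun v => ENNReal.ofReal (truncCauchy d c₁ 1 v)

section Gradient

variable {F : Type*} [NormedAddCommGroup F] [InnerProductSpace ℝ F] [CompleteSpace F]

theorem norm_fderiv_eq_norm_gradient (f : F → ℝ) (x : F) : ‖fderiv ℝ f x‖ = ‖gradient f x‖ := by
  rw [← toDual_gradient, LinearIsometryEquiv.norm_map]

theorem abs_sub_le_of_norm_gradient_le {f : F → ℝ} {B : ℝ} (hf : Differentiable ℝ f)
    (hB : ∀ y, ‖gradient f y‖ ≤ B) (y z : F) : |f y - f z| ≤ B * ‖y - z‖ :=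
  convex_univ.norm_image_sub_le_of_norm_fderiv_le (fun w _ => hf w)
    (fun w _ => (norm_fderiv_eq_norm_gradient f w).trans_le (hB w)) (Set.mem_univ z)
    (Set.mem_univ y)

end Gradient

theorem nonneg_of_norm_sub_le_mul_norm_sub {E G : Type*} [NormedAddCommGroup E] [Nontrivial E]
    [SeminormedAddCommGroup G] {g : E → G} {L : ℝ} (h : ∀ a b, ‖g a - g b‖ ≤ L * ‖a - b‖) :
    0 ≤ L := by
  obtain ⟨a, b, hab⟩ := exists_pair_ne E
  exact nonneg_of_mul_nonneg_left ((norm_nonneg _).trans (h a b))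
    (norm_pos_iff.2 (sub_ne_zero.2 hab))

section TruncCauchy

variable {d : ℕ} {c₁ δ : ℝ}

theorem truncCauchy_nonneg (hc₁ : 0 ≤ c₁) (u : EuclideanSpace ℝ (Fin d)) :
    0 ≤ truncCauchy d c₁ δ u := by
  unfold truncCauchy
  split_ifs with hu
  · have : 0 ≤ δ := (norm_nonneg u).trans hu
    positivity
  · exact le_rfl

theorem truncCauchy_eq_zero_of_lt {u : EuclideanSpace ℝ (Fin d)} (hu : δ < ‖u‖) :
    truncCauchy d c₁ δ u = 0 :=
  if_neg hu.not_ge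

theorem measurable_truncCauchy : Measurable (truncCauchy d c₁ δ) :=
  Measurable.ite (measurableSet_le measurable_norm measurable_const) (by fun_prop) measurable_const

theorem truncCauchy_le_indicator (hc₁ : 0 ≤ c₁) (u : EuclideanSpace ℝ (Fin d)) :
    truncCauchy d c₁ δ u ≤ (Metric.closedBall 0 δ).indicator
      (fun _ => Gamma ((d + 1) / 2) / (π ^ (((d : ℝ) + 1) / 2) * c₁ * δ ^ d)) u := by
  unfold truncCauchy
  split_ifs with hu
  · have hδ : 0 ≤ δ := (norm_nonneg u).trans hu
    rw [Set.indicator_of_mem (mem_closedBall_zero_iff.2 hu)]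
    refine mul_le_of_le_one_right (by positivity) (rpow_le_one_of_one_le_of_nonpos ?_ ?_)
    · have : 0 ≤ ‖u‖ ^ 2 / δ ^ 2 := by positivity
      linarith
    · have : (0 : ℝ) ≤ ((d : ℝ) + 1) / 2 := by positivity
      linarith
  · rw [Set.indicator_of_notMem (by simpa using hu)]

theorem integrable_indicator_closedBall_const (r C : ℝ) :
    Integrable ((Metric.closedBall (0 : EuclideanSpace ℝ (Fin d)) r).indicator fun _ => C) :=
  (integrableOn_const measure_closedBall_lt_top.ne).integrable_indicator measurableSet_closedBall

theorem integrable_truncCauchy (hc₁ : 0 ≤ c₁) : Integrable (truncCauchy d c₁ δ) :=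
  (integrable_indicator_closedBall_const _ _).mono'
    measurable_truncCauchy.aestronglyMeasurable <| .of_forall fun u => by
      rw [norm_of_nonneg (truncCauchy_nonneg hc₁ u)]
      exact truncCauchy_le_indicator hc₁ u

theorem integral_truncCauchy_le (hd : 0 < d) (hc₁ : 0 < c₁) (hδ : 0 < δ) :
    ∫ u, truncCauchy d c₁ δ u ≤ Gamma ((d + 1) / 2) / (√π * c₁ * Gamma (d / 2 + 1)) := by
  have : Nonempty (Fin d) := ⟨⟨0, hd⟩⟩
  have hΓ : 0 < Gamma ((d : ℝ) / 2 + 1) := Gamma_pos_of_pos (by positivity)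
  have hvol : volume.real (Metric.closedBall (0 : EuclideanSpace ℝ (Fin d)) δ) =
      δ ^ d * (√π ^ d / Gamma (d / 2 + 1)) := by
    rw [measureReal_def, EuclideanSpace.volume_closedBall, ENNReal.toReal_mul,
      ENNReal.toReal_pow, ENNReal.toReal_ofReal hδ.le, ENNReal.toReal_ofReal (by positivity),
      Fintype.card_fin]
  calc ∫ u, truncCauchy d c₁ δ u
      ≤ ∫ u, (Metric.closedBall 0 δ).indicator
          (fun _ => Gamma ((d + 1) / 2) / (π ^ (((d : ℝ) + 1) / 2) * c₁ * δ ^ d)) u :=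
        integral_mono (integrable_truncCauchy hc₁.le)
          (integrable_indicator_closedBall_const _ _)
          (truncCauchy_le_indicator hc₁.le)
    _ = Gamma ((d + 1) / 2) / (√π * c₁ * Gamma (d / 2 + 1)) := by
        rw [integral_indicator_const _ measurableSet_closedBall, smul_eq_mul, hvol,
          rpow_div_two_eq_sqrt _ pi_pos.le, ← Nat.cast_add_one, rpow_natCast]
        have : 0 < √π := sqrt_pos.2 pi_pos
        field_simp
        ring

theorem natCast_le_of_integral_truncCauchy_eq_one (hd : 0 < d) (hc₁ : 0 < c₁)
    (hnorm : ∫ u, truncCauchy d c₁ 1 u = 1) :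
    (d : ℝ) ≤ 2 * Gamma ((d + 1) / 2) / (√π * Gamma (d / 2) * c₁) := by
  have h := hnorm ▸ integral_truncCauchy_le hd hc₁ one_pos
  have hΓ : 0 < Gamma ((d : ℝ) / 2) := Gamma_pos_of_pos (by positivity)
  rw [Gamma_add_one (by positivity), one_le_div (by positivity)] at h
  rw [le_div_iff₀ (by positivity)]
  linarith

theorem abs_integral_truncCauchy_mul_sub_le {f : EuclideanSpace ℝ (Fin d) → ℝ} {B : ℝ}
    (hc₁ : 0 ≤ c₁) (hδ : 0 ≤ δ) (hf : Differentiable ℝ f) (hB : ∀ y, ‖gradient f y‖ ≤ B)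
    (x : EuclideanSpace ℝ (Fin d)) :
    |∫ u, truncCauchy d c₁ 1 u * (f (x + δ • u) - f x)| ≤
      (∫ u, truncCauchy d c₁ 1 u) * (B * δ) := by
  rw [← norm_eq_abs, ← integral_mul_const (B * δ) (truncCauchy d c₁ 1)]
  refine norm_integral_le_of_norm_le ((integrable_truncCauchy hc₁).mul_const _)
    (.of_forall fun u => ?_)
  rw [norm_mul, norm_of_nonneg (truncCauchy_nonneg hc₁ u), norm_eq_abs]
  rcases le_or_gt ‖u‖ 1 with hu | hu
  · have hB₀ : 0 ≤ B := (norm_nonneg _).trans (hB x)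
    refine mul_le_mul_of_nonneg_left ?_ (truncCauchy_nonneg hc₁ u)
    calc |f (x + δ • u) - f x| ≤ B * ‖x + δ • u - x‖ := abs_sub_le_of_norm_gradient_le hf hB _ _
      _ = B * (δ * ‖u‖) := by rw [add_sub_cancel_left, norm_smul, norm_of_nonneg hδ]
      _ ≤ B * δ := mul_le_mul_of_nonneg_left (mul_le_of_le_one_right hδ hu) hB₀
  · simp [truncCauchy_eq_zero_of_lt hu]

end TruncCauchy

/-- Bound on the δ-difference smoothed function:
`|f_δ(x)| = |E_u[f(x+δu) − f(x)]| ≤ (c₁₁/(d+1))(Lδ²/2 + 2δB)`. -/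
theorem delta_difference_smoothed_bound
    (d : ℕ) (hd : 0 < d) (c₁ : ℝ) (hc₁ : 0 < c₁)
    (hnorm : ∫ u : EuclideanSpace ℝ (Fin d), truncCauchy d c₁ 1 u = 1)
    (f : EuclideanSpace ℝ (Fin d) → ℝ) (L B : ℝ)
    (hf : Differentiable ℝ f)
    (hlip : ∀ a b : EuclideanSpace ℝ (Fin d), ‖gradient f a - gradient f b‖ ≤ L * ‖a - b‖)
    (hgB : ∀ y, ‖gradient f y‖ ≤ B)
    (c₁₁ : ℝ)
    (hc₁₁ : c₁₁ = 2 * Real.Gamma (((d : ℝ) + 1) / 2) /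
      (Real.sqrt Real.pi * Real.Gamma ((d : ℝ) / 2) * c₁))
    (δ : ℝ) (hδ : 0 < δ) (x : EuclideanSpace ℝ (Fin d)) :
    |∫ u : EuclideanSpace ℝ (Fin d), truncCauchy d c₁ 1 u * (f (x + δ • u) - f x)|
      ≤ (c₁₁ / ((d : ℝ) + 1)) * (L * δ ^ 2 / 2 + 2 * δ * B) := by
  have : Nonempty (Fin d) := ⟨⟨0, hd⟩⟩
  have hL : 0 ≤ L := nonneg_of_norm_sub_le_mul_norm_sub hlip
  have hB : 0 ≤ B := (norm_nonneg _).trans (hgB x)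
  have hd₁ : (1 : ℝ) ≤ d := by exact_mod_cast hd
  have hc₁₁d : (d : ℝ) ≤ c₁₁ := hc₁₁ ▸ natCast_le_of_integral_truncCauchy_eq_one hd hc₁ hnorm
  have hsmooth := abs_integral_truncCauchy_mul_sub_le hc₁.le hδ.le hf hgB x
  rw [hnorm, one_mul] at hsmooth
  refine hsmooth.trans ?_
  rw [div_mul_eq_mul_div, le_div_iff₀ (by positivity)]
  nlinarith [mul_nonneg (mul_nonneg hB hδ.le) (sub_nonneg.2 hd₁), mul_nonneg hL (sq_nonneg δ),
    mul_nonneg (mul_nonneg hB hδ.le) (sub_nonneg.2 hc₁₁d)]
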